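/- arXiv:1006.2615 — 8 statements merged into one kernel-verified Lean document; each statement's English description precedes it below -/
import Mathlib

section
/- Let a, b, c ∈ ℝ and let x, λ, μ : I → ℝ be differentiable on an interval I, satisfying x' = −a x + (b + c x) u, λ' = a λ − 1 + u, and μ' = (c μ − b λ) u for a function u : I → ℝ. Then the switching function σ := b λ − c μ − x is differentiable and satisfies σ'(t) = c·u(t)·σ(t) + a b λ(t) + a x(t) − b for all t ∈ I. In particular, on any arc where u ≡ 1 one has σ' = c σ + a b λ + a x − b, and on any arc where σ ≡ 0 one has a b λ + a x − b = 0. -/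
/-!
Differentiating `σ = b λ - c μ - x` term by term and substituting the characteristic system,
the `u`-terms combine to `c u σ` while the rest is `a b λ + a x - b`. On an open arc where
`σ ≡ 0` the derivative of `σ` also vanishes, which together with `σ = 0` leaves
`a b λ + a x - b = 0`.
-/

open Filter Topology

theorem HasDerivAt.eq_zero_of_eventuallyEq_const {𝕜 F : Type*} [NontriviallyNormedField 𝕜]
    [NormedAddCommGroup F] [NormedSpace 𝕜 F] {f : 𝕜 → F} {f' : F} {t : 𝕜} {y : F}
    (hf : HasDerivAt f f' t) (hconst : f =ᶠ[𝓝 t] fun _ => y) : f' = 0 :=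
  hf.unique ((hasDerivAt_const t y).congr_of_eventuallyEq hconst)

theorem hasDerivAt_switchingFunction {a b c t v : ℝ} {x lam mu : ℝ → ℝ}
    (hx : HasDerivAt x (-a * x t + (b + c * x t) * v) t)
    (hlam : HasDerivAt lam (a * lam t - 1 + v) t)
    (hmu : HasDerivAt mu ((c * mu t - b * lam t) * v) t) :
    HasDerivAt (fun s => b * lam s - c * mu s - x s)
      (c * v * (b * lam t - c * mu t - x t) + a * b * lam t + a * x t - b) t :=
  (((hlam.const_mul b).sub (hmu.const_mul c)).sub hx).congr_deriv (by ring)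

theorem switching_function_dynamics_general (a b c : ℝ) (I : Set ℝ)
    (hI_open : IsOpen I)
    (x lam mu u : ℝ → ℝ)
    (hx : ∀ t ∈ I, HasDerivAt x (-a * x t + (b + c * x t) * u t) t)
    (hlam : ∀ t ∈ I, HasDerivAt lam (a * lam t - 1 + u t) t)
    (hmu : ∀ t ∈ I, HasDerivAt mu ((c * mu t - b * lam t) * u t) t) :
    (∀ t ∈ I, HasDerivAt (fun s => b * lam s - c * mu s - x s)
      (c * u t * (b * lam t - c * mu t - x t) + a * b * lam t + a * x t - b) t) ∧
    ((∀ t ∈ I, u t = 1) → ∀ t ∈ I, HasDerivAt (fun s => b * lam s - c * mu s - x s)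
      (c * (b * lam t - c * mu t - x t) + a * b * lam t + a * x t - b) t) ∧
    ((∀ t ∈ I, b * lam t - c * mu t - x t = 0) →
      ∀ t ∈ I, a * b * lam t + a * x t - b = 0) := by
  have hσ : ∀ t ∈ I, HasDerivAt (fun s => b * lam s - c * mu s - x s)
      (c * u t * (b * lam t - c * mu t - x t) + a * b * lam t + a * x t - b) t :=
    fun t ht => hasDerivAt_switchingFunction (hx t ht) (hlam t ht) (hmu t ht)
  refine ⟨hσ, fun hu t ht => ?_, fun hzero t ht => ?_⟩
  · simpa only [hu t ht, mul_one] using hσ t ht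
  · have hderiv_zero := (hσ t ht).eq_zero_of_eventuallyEq_const
      (eventuallyEq_of_mem (hI_open.mem_nhds ht) hzero)
    rwa [hzero t ht, mul_zero, zero_add] at hderiv_zero

/-- Along the characteristic system `x' = -a x + (b + c x) u`,
`λ' = a λ - 1 + u`, `μ' = (c μ - b λ) u`, the switching function `σ = b λ - c μ - x`
is differentiable and satisfies `σ' = c u σ + a b λ + a x - b`.
In particular, on an arc where `u ≡ 1` one has `σ' = c σ + a b λ + a x - b`, and
on an arc where `σ ≡ 0` one has `a b λ + a x - b = 0`. -/
theorem switching_function_dynamics (a b c : ℝ) (I : Set ℝ)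
    (hI_open : IsOpen I) (hI_conn : I.OrdConnected)
    (x lam mu u : ℝ → ℝ)
    (hx : ∀ t ∈ I, HasDerivAt x (-a * x t + (b + c * x t) * u t) t)
    (hlam : ∀ t ∈ I, HasDerivAt lam (a * lam t - 1 + u t) t)
    (hmu : ∀ t ∈ I, HasDerivAt mu ((c * mu t - b * lam t) * u t) t) :
    (∀ t ∈ I, HasDerivAt (fun s => b * lam s - c * mu s - x s)
      (c * u t * (b * lam t - c * mu t - x t) + a * b * lam t + a * x t - b) t) ∧
    ((∀ t ∈ I, u t = 1) → ∀ t ∈ I, HasDerivAt (fun s => b * lam s - c * mu s - x s)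
      (c * (b * lam t - c * mu t - x t) + a * b * lam t + a * x t - b) t) ∧
    ((∀ t ∈ I, b * lam t - c * mu t - x t = 0) →
      ∀ t ∈ I, a * b * lam t + a * x t - b = 0) :=
  switching_function_dynamics_general a b c I hI_open x lam mu u hx hlam hmu
end

section
/- Let a, b, c > 0 and let x : I → ℝ be a positive differentiable function on an interval I solving x' = a c x²/(2b + c x). Define u := 2 a x/(2b + c x), λ := 1/a − x/b, and μ := b/(a c) − 2x/c. Then on all of I: λ' = a λ − 1 + u, μ' = (c μ − b λ)·u, and b λ − c μ − x = 0; that is, (x, λ, μ, u) is a solution of the characteristic system along which the switching function σ = b λ − c μ − x vanishes identically. -/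
/-! On the singular arc the costates are affine in the state, `λ = 1/a - x/b` and
`μ = b/(a c) - 2x/c`, chosen so that `c μ - b λ = -x`; this makes the switching function
`σ = -(c μ - b λ) - x` vanish identically and turns the costate equations into
consequences of the state equation `x' = a c x²/(2b + c x)` by the chain rule and
rational-function algebra. -/

section SingularArc

variable {a b c : ℝ}

lemma costate_combination_eq_neg (hb : b ≠ 0) (hc : c ≠ 0) (x : ℝ) :
    c * (b / (a * c) - 2 * x / c) - b * (1 / a - x / b) = -x := by
  field_simp
  ring

variable {x : ℝ → ℝ} {t : ℝ}

lemma hasDerivAt_costate_lam (ha : a ≠ 0) (hb : b ≠ 0) (hD : 2 * b + c * x t ≠ 0)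
    (hx : HasDerivAt x (a * c * x t ^ 2 / (2 * b + c * x t)) t) :
    HasDerivAt (fun s => 1 / a - x s / b)
      (a * (1 / a - x t / b) - 1 + 2 * a * x t / (2 * b + c * x t)) t := by
  refine ((hx.div_const b).const_sub (1 / a)).congr_deriv ?_
  field_simp
  ring

lemma hasDerivAt_costate_mu (hb : b ≠ 0) (hc : c ≠ 0) (hD : 2 * b + c * x t ≠ 0)
    (hx : HasDerivAt x (a * c * x t ^ 2 / (2 * b + c * x t)) t) :
    HasDerivAt (fun s => b / (a * c) - 2 * x s / c)
      ((c * (b / (a * c) - 2 * x t / c) - b * (1 / a - x t / b)) *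
        (2 * a * x t / (2 * b + c * x t))) t := by
  rw [costate_combination_eq_neg hb hc]
  refine (((hx.const_mul 2).div_const c).const_sub (b / (a * c))).congr_deriv ?_
  field_simp

end SingularArc

/-- If `x > 0` solves `x' = a c x²/(2b + c x)` on `I` and we set
`u = 2 a x/(2b + c x)`, `λ = 1/a - x/b`, `μ = b/(a c) - 2x/c`, then
`λ' = a λ - 1 + u`, `μ' = (c μ - b λ) u`, and `b λ - c μ - x = 0` on `I`:
`(x, λ, μ, u)` solves the characteristic system with vanishing switching function. -/
theorem singular_arc_solution (a b c : ℝ) (ha : 0 < a) (hb : 0 < b) (hc : 0 < c)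
    (I : Set ℝ) (x : ℝ → ℝ)
    (hx_pos : ∀ t ∈ I, 0 < x t)
    (hx : ∀ t ∈ I, HasDerivAt x (a * c * (x t) ^ 2 / (2 * b + c * x t)) t)
    (u lam mu : ℝ → ℝ)
    (hu : ∀ t, u t = 2 * a * x t / (2 * b + c * x t))
    (hlam : ∀ t, lam t = 1 / a - x t / b)
    (hmu : ∀ t, mu t = b / (a * c) - 2 * x t / c) :
    (∀ t ∈ I, HasDerivAt lam (a * lam t - 1 + u t) t) ∧
    (∀ t ∈ I, HasDerivAt mu ((c * mu t - b * lam t) * u t) t) ∧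
    (∀ t ∈ I, b * lam t - c * mu t - x t = 0) := by
  have hD : ∀ t ∈ I, 2 * b + c * x t ≠ 0 := fun t ht => by
    have := hx_pos t ht
    positivity
  obtain rfl : u = fun t => 2 * a * x t / (2 * b + c * x t) := funext hu
  obtain rfl : lam = fun t => 1 / a - x t / b := funext hlam
  obtain rfl : mu = fun t => b / (a * c) - 2 * x t / c := funext hmu
  refine ⟨fun t ht => hasDerivAt_costate_lam ha.ne' hb.ne' (hD t ht) (hx t ht),
    fun t ht => hasDerivAt_costate_mu hb.ne' hc.ne' (hD t ht) (hx t ht), fun t _ => ?_⟩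
  linarith [costate_combination_eq_neg (a := a) hb.ne' hc.ne' (x t)]
end

section
/- Let a, b, c > 0, let x⁰ > 0 and t⁰ ∈ ℝ, and for t ≤ t⁰ define x(t) = x⁰·e^{a(t⁰ − t)}, λ(t) = 1/a − (x⁰/b)·e^{−a(t⁰ − t)}, and μ(t) = (1/c)·(b/a − 2x⁰). Then the switching function σ(t) := b λ(t) − c μ(t) − x(t) satisfies σ(t) = 2x⁰·(1 − cosh(a(t⁰ − t))) ≤ 0 for all t ≤ t⁰, with equality only at t = t⁰. Hence along these u = 0 tributaries reaching the singular arc from above, the switching function remains nonpositive, so the optimal control remains u = 0 all along. -/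
/-- Along the `u = 0` tributaries reaching the singular arc from above at
`(t⁰, x⁰)`, given by `x(t) = x⁰ e^{a(t⁰-t)}`, `λ(t) = 1/a - (x⁰/b) e^{-a(t⁰-t)}`,
`μ(t) = (1/c)(b/a - 2x⁰)`, the switching function satisfies
`σ(t) = 2x⁰ (1 - cosh(a(t⁰-t))) ≤ 0` for all `t ≤ t⁰`, with equality only at `t = t⁰`.
Hence the optimal control remains `u = 0` all along. -/
theorem u0_tributary_switching (a b c x0 t0 : ℝ)
    (ha : 0 < a) (hb : 0 < b) (hc : 0 < c) (hx0 : 0 < x0)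
    (x lam mu σ : ℝ → ℝ)
    (hx : ∀ t, x t = x0 * Real.exp (a * (t0 - t)))
    (hlam : ∀ t, lam t = 1 / a - (x0 / b) * Real.exp (-(a * (t0 - t))))
    (hmu : ∀ t, mu t = (1 / c) * (b / a - 2 * x0))
    (hσ : ∀ t, σ t = b * lam t - c * mu t - x t) :
    ∀ t ≤ t0,
      σ t = 2 * x0 * (1 - Real.cosh (a * (t0 - t))) ∧
      σ t ≤ 0 ∧
      (σ t = 0 ↔ t = t0) := by
  intro t ht
  have hσt : σ t = 2 * x0 * (1 - Real.cosh (a * (t0 - t))) := by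
    rw [hσ, hlam, hmu, hx, Real.cosh_eq]
    field_simp
    ring
  have hcosh : 1 ≤ Real.cosh (a * (t0 - t)) := Real.one_le_cosh _
  refine ⟨hσt, ?_, ?_⟩
  · rw [hσt]
    nlinarith
  · rw [hσt]
    constructor
    · intro h
      have h1 : Real.cosh (a * (t0 - t)) = 1 := by nlinarith
      have h2 : a * (t0 - t) = 0 := by
        by_contra hne
        have := Real.one_lt_cosh.mpr hne
        linarith
      have : t0 - t = 0 := by
        rcases mul_eq_zero.mp h2 with h | h
        · exact absurd h ha.ne'
        · exact h
      linarith
    · intro h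
      subst h
      simp
end

section
/- Let a, b, c > 0 and let x : [t₀, t̂] → ℝ be a positive differentiable function solving x'(t) = a c x(t)²/(2b + c x(t)) with terminal value x(t̂) = b/(2a). Then for every t ∈ [t₀, t̂): x(t) < b/(2a), hence μ(t) := b/(a c) − 2x(t)/c > 0 and the mutant's switching function σ_m(t) := b λ(t) − x(t) = c μ(t) > 0, where λ(t) := 1/a − x(t)/b. Consequently a rare mutant can strictly improve its fitness by choosing u_m = 1 on the singular arc, so the cooperative optimal strategy can be invaded. -/
/-- On the cooperative singular arc `x' = a c x²/(2b + c x)` on `[t₀, t̂]`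
with `x(t̂) = b/(2a)`, for every `t ∈ [t₀, t̂)` one has `x(t) < b/(2a)`, hence
`μ(t) = b/(ac) - 2x(t)/c > 0` and the mutant switching function
`σ_m(t) = b λ(t) - x(t) = c μ(t) > 0`, where `λ(t) = 1/a - x(t)/b`. Hence a rare mutant
can strictly improve its fitness with `u_m = 1`: the cooperative optimum can be invaded. -/
theorem cooperative_optimum_invadable (a b c t₀ that : ℝ)
    (ha : 0 < a) (hb : 0 < b) (hc : 0 < c) (ht : t₀ < that)
    (x : ℝ → ℝ)
    (hx_pos : ∀ t ∈ Set.Icc t₀ that, 0 < x t)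
    (hx : ∀ t ∈ Set.Icc t₀ that,
      HasDerivWithinAt x (a * c * (x t) ^ 2 / (2 * b + c * x t)) (Set.Icc t₀ that) t)
    (hxT : x that = b / (2 * a))
    (lam mu σm : ℝ → ℝ)
    (hlam : ∀ t, lam t = 1 / a - x t / b)
    (hmu : ∀ t, mu t = b / (a * c) - 2 * x t / c)
    (hσm : ∀ t, σm t = b * lam t - x t) :
    ∀ t ∈ Set.Ico t₀ that,
      x t < b / (2 * a) ∧ 0 < mu t ∧ σm t = c * mu t ∧ 0 < σm t := by
  have hmono : StrictMonoOn x (Set.Icc t₀ that) := by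
    apply strictMonoOn_of_deriv_pos (convex_Icc _ _)
    · exact fun t ht' => (hx t ht').continuousWithinAt
    · intro t ht'
      rw [interior_Icc] at ht'
      have hmem : t ∈ Set.Icc t₀ that := Set.mem_Icc_of_Ioo ht'
      have hd : HasDerivAt x (a * c * (x t) ^ 2 / (2 * b + c * x t)) t :=
        (hx t hmem).hasDerivAt (Icc_mem_nhds ht'.1 ht'.2)
      rw [hd.deriv]
      have hxp := hx_pos t hmem
      positivity
  intro t htI
  have hmem : t ∈ Set.Icc t₀ that := Set.mem_Icc_of_Ico htI
  have hlt : x t < b / (2 * a) := by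
    rw [← hxT]
    exact hmono hmem (Set.right_mem_Icc.mpr ht.le) htI.2
  have hmu' : 0 < mu t := by
    have h2 : x t * (2 * a) < b := (lt_div_iff₀ (by positivity)).mp hlt
    rw [hmu t, sub_pos, div_lt_div_iff₀ hc (by positivity)]
    nlinarith
  have hσ : σm t = c * mu t := by
    rw [hσm t, hlam t, hmu t]
    field_simp
    ring
  exact ⟨hlt, hmu', hσ, hσ ▸ by positivity⟩
end

section
/- Let a, b, c > 0 and let x, λ : I → ℝ be differentiable on an open interval I with x(t) > 0, satisfying the resident dynamics x' = −a x + (b + c x) u and the mutant adjoint equation λ' = a λ − 1 + u for a function u : I → ℝ, and suppose the mutant switching function σ_m := b λ − x vanishes identically on I. Then on all of I the resident control satisfies u = (2 a x − b)/(c x), and consequently x' = (a c x² + b(2a − c) x − b²)/(c x). -/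
/-- On the ESS singular arc, where the mutant switching function
`σ_m = b λ - x` vanishes identically on the open interval `I` (with `x > 0`, resident
dynamics `x' = -a x + (b + c x) u` and mutant adjoint `λ' = a λ - 1 + u`), the resident
control satisfies `u = (2 a x - b)/(c x)` and consequently
`x' = (a c x² + b (2a - c) x - b²)/(c x)`. -/
theorem ess_singular_arc_control (a b c : ℝ) (ha : 0 < a) (hb : 0 < b) (hc : 0 < c)
    (I : Set ℝ) (hI_open : IsOpen I) (hI_conn : I.OrdConnected)
    (x lam u : ℝ → ℝ)
    (hx_pos : ∀ t ∈ I, 0 < x t)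
    (hx : ∀ t ∈ I, HasDerivAt x (-a * x t + (b + c * x t) * u t) t)
    (hlam : ∀ t ∈ I, HasDerivAt lam (a * lam t - 1 + u t) t)
    (hσm : ∀ t ∈ I, b * lam t - x t = 0) :
    (∀ t ∈ I, u t = (2 * a * x t - b) / (c * x t)) ∧
    (∀ t ∈ I, HasDerivAt x
      ((a * c * (x t) ^ 2 + b * (2 * a - c) * x t - b ^ 2) / (c * x t)) t) := by
  have key : ∀ t ∈ I, u t = (2 * a * x t - b) / (c * x t) := by
    intro t ht
    have hxt := hx_pos t ht
    have hcx : c * x t ≠ 0 := by positivity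
    have hσ : HasDerivAt (fun s => b * lam s - x s)
        (b * (a * lam t - 1 + u t) - (-a * x t + (b + c * x t) * u t)) t :=
      ((hlam t ht).const_mul b).sub (hx t ht)
    have hzero : HasDerivAt (fun s => b * lam s - x s) 0 t := by
      have : (fun _ : ℝ => (0 : ℝ)) =ᶠ[nhds t] fun s => b * lam s - x s := by
        filter_upwards [hI_open.mem_nhds ht] with s hs using (hσm s hs).symm
      exact (hasDerivAt_const t 0).congr_of_eventuallyEq this.symm
    have heq : b * (a * lam t - 1 + u t) - (-a * x t + (b + c * x t) * u t) = 0 :=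
      hσ.unique hzero
    have hbl : b * lam t = x t := by have := hσm t ht; linarith
    field_simp
    nlinarith [heq, hbl]
  refine ⟨key, fun t ht => ?_⟩
  have hxt := hx_pos t ht
  have hcx : c * x t ≠ 0 := by positivity
  have : -a * x t + (b + c * x t) * u t
      = (a * c * (x t) ^ 2 + b * (2 * a - c) * x t - b ^ 2) / (c * x t) := by
    rw [key t ht]
    field_simp
    ring
  exact this ▸ hx t ht
end

section
/- Let a, b, c > 0, let x̄ = (b/(2ac))·(c − 2a + √(4a² + c²)), let t̂ ∈ ℝ, and let x : (−∞, t̂] → ℝ be a differentiable function with x(t) > 0 for all t, solving x'(t) = (a c x(t)² + b(2a − c) x(t) − b²)/(c x(t)) with x(t̂) = b/(2a). Then b/(2a) ≤ x(t) < x̄ for all t ≤ t̂, x is strictly decreasing in t (so x increases as t decreases), and x(t) → x̄ as t → −∞. -/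
/-!
Write `F(y) = (a c y² + b(2a - c) y - b²)/(c y)`. Since `x̄` is a root of the numerator,
`F(y) = (y - x̄) k(y)` with `k > 0` on `y > 0`, so `F` is negative exactly on `(0, x̄)`.
An arc starting below `x̄` at `t̂` never meets `x̄` in the past: on an interval where it did,
`x - x̄` would solve the linear equation `u' = k(x(t)) u` with `u = 0` at one end, so by
Grönwall it would vanish at `t̂` too. Hence `x' < 0`, `x` increases backwards in time and is
bounded by `x̄`, so it has a limit `L > 0` at `-∞`; then `x' → F(L)`, which forces `F(L) = 0`,
i.e. `L = x̄`.
-/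

open Set Filter Topology

theorem eq_of_hasDerivWithinAt_sub_mul {x k : ℝ → ℝ} {p T b : ℝ}
    (hx : ContinuousOn x (Icc T b)) (hk : ContinuousOn k (Icc T b))
    (hderiv : ∀ t ∈ Ico T b, HasDerivWithinAt x ((x t - p) * k t) (Ici t) t)
    (hT : x T = p) : ∀ t ∈ Icc T b, x t = p := by
  obtain ⟨K, hK⟩ := isCompact_Icc.exists_bound_of_continuousOn hk
  have hzero := eq_zero_of_abs_deriv_le_mul_abs_self_of_eq_zero_right (f := fun t => x t - p)
    (K := K) (hx.sub continuousOn_const) (fun t ht => (hderiv t ht).sub_const p)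
    (sub_eq_zero.2 hT) fun t ht => by
      rw [norm_mul, mul_comm]
      exact mul_le_mul_of_nonneg_right (hK t (Ico_subset_Icc_self ht)) (norm_nonneg _)
  exact fun t ht => sub_eq_zero.1 (hzero t ht)

theorem AntitoneOn.exists_tendsto_atBot {α β : Type*} [LinearOrder α]
    [ConditionallyCompleteLattice β] [TopologicalSpace β] [SupConvergenceClass β]
    {f : α → β} {b : α} (hf : AntitoneOn f (Iic b))
    (hbdd : BddAbove (f '' Iic b)) : ∃ L, Tendsto f atBot (𝓝 L) := by
  have hanti : Antitone fun t => f (min t b) := fun s t hst =>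
    hf (min_le_right s b) (min_le_right t b) (min_le_min_right b hst)
  have hrange : BddAbove (range fun t => f (min t b)) :=
    hbdd.mono <| range_subset_iff.2 fun t => mem_image_of_mem f (min_le_right t b)
  refine ⟨_, (tendsto_atBot_ciSup hanti hrange).congr' ?_⟩
  filter_upwards [eventually_le_atBot b] with t ht
  rw [min_eq_left ht]

theorem eq_zero_of_tendsto_atBot_of_tendsto_deriv {f f' : ℝ → ℝ} {L ℓ : ℝ}
    (hderiv : ∀ᶠ t in atBot, HasDerivAt f (f' t) t)
    (hf : Tendsto f atBot (𝓝 L)) (hf' : Tendsto f' atBot (𝓝 ℓ)) : ℓ = 0 := by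
  have hinc_zero : Tendsto (fun t => f t - f (t - 1)) atBot (𝓝 0) := by
    have hshift : Tendsto (fun t => f (t - 1)) atBot (𝓝 L) :=
      (hf.comp (tendsto_atBot_add_const_right _ (-1) tendsto_id)).congr fun t => by
        simp [sub_eq_add_neg]
    simpa using hf.sub hshift
  -- by the mean value theorem, each unit increment is a value of `f'` further to the left
  have hinc_deriv : Tendsto (fun t => f t - f (t - 1)) atBot (𝓝 ℓ) := by
    refine Metric.tendsto_nhds.2 fun ε hε => ?_
    obtain ⟨N, hN⟩ := eventually_atBot.1 (Metric.tendsto_nhds.1 hf' ε hε)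
    obtain ⟨M, hM⟩ := eventually_atBot.1 hderiv
    filter_upwards [eventually_le_atBot (min N M)] with t ht
    have hdiff : ∀ s ∈ Icc (t - 1) t, HasDerivAt f (f' s) s := fun s hs =>
      hM s (hs.2.trans (ht.trans (min_le_right N M)))
    obtain ⟨ξ, hξ, hslope⟩ := exists_hasDerivAt_eq_slope f f' (sub_one_lt t)
      (fun s hs => (hdiff s hs).continuousAt.continuousWithinAt)
      (fun s hs => hdiff s (Ioo_subset_Icc_self hs))
    rw [sub_sub_cancel, div_one] at hslope
    rw [← hslope]
    exact hN ξ (hξ.2.le.trans (ht.trans (min_le_left N M)))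
  exact tendsto_nhds_unique hinc_deriv hinc_zero

/-- The right-hand side `F` of the singular-arc equation `x' = F(x)`. -/
noncomputable def essField (a b c y : ℝ) : ℝ :=
  (a * c * y ^ 2 + b * (2 * a - c) * y - b ^ 2) / (c * y)

noncomputable def essRoot (a b c : ℝ) : ℝ :=
  (b / (2 * a * c)) * (c - 2 * a + Real.sqrt (4 * a ^ 2 + c ^ 2))

/-- The factor `k` in `F(y) = (y - x̄) k(y)`. -/
noncomputable def essRate (a b c y : ℝ) : ℝ :=
  (a * c * (y + essRoot a b c) + b * (2 * a - c)) / (c * y)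

section Field

variable {a b c : ℝ}

theorem essRoot_pos (ha : 0 < a) (hb : 0 < b) (hc : 0 < c) : 0 < essRoot a b c := by
  have hs : 2 * a < Real.sqrt (4 * a ^ 2 + c ^ 2) :=
    Real.lt_sqrt_of_sq_lt (by nlinarith)
  unfold essRoot
  exact mul_pos (by positivity) (by linarith)

theorem essRoot_quadratic_eq_zero (ha : 0 < a) (hc : 0 < c) :
    a * c * essRoot a b c ^ 2 + b * (2 * a - c) * essRoot a b c - b ^ 2 = 0 := by
  have hs : Real.sqrt (4 * a ^ 2 + c ^ 2) ^ 2 = 4 * a ^ 2 + c ^ 2 := Real.sq_sqrt (by positivity)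
  unfold essRoot
  generalize Real.sqrt (4 * a ^ 2 + c ^ 2) = s at hs ⊢
  field_simp
  linear_combination b ^ 2 * hs

theorem essField_eq_sub_mul_essRate (ha : 0 < a) (hc : 0 < c) (y : ℝ) :
    essField a b c y = (y - essRoot a b c) * essRate a b c y := by
  rw [essField, essRate, ← mul_div_assoc]
  congr 1
  linear_combination essRoot_quadratic_eq_zero (b := b) ha hc

theorem essRate_pos (ha : 0 < a) (hb : 0 < b) (hc : 0 < c) {y : ℝ} (hy : 0 < y) :
    0 < essRate a b c y := by
  have hr := essRoot_pos ha hb hc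
  -- the root equation reads `x̄ (a c x̄ + b (2a - c)) = b² > 0`
  have hrate : 0 < a * c * essRoot a b c + b * (2 * a - c) := by
    refine pos_of_mul_pos_right (a := essRoot a b c) ?_ hr.le
    nlinarith [essRoot_quadratic_eq_zero (b := b) ha hc]
  unfold essRate
  exact div_pos (by nlinarith [mul_pos (mul_pos ha hc) hy]) (by positivity)

theorem essField_neg_iff (ha : 0 < a) (hb : 0 < b) (hc : 0 < c) {y : ℝ} (hy : 0 < y) :
    essField a b c y < 0 ↔ y < essRoot a b c := by
  have hk := essRate_pos ha hb hc hy
  rw [essField_eq_sub_mul_essRate ha hc]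
  exact ⟨fun h => sub_neg.1 (neg_of_mul_neg_left h hk.le),
    fun h => mul_neg_of_neg_of_pos (sub_neg.2 h) hk⟩

theorem essField_eq_zero_iff (ha : 0 < a) (hb : 0 < b) (hc : 0 < c) {y : ℝ} (hy : 0 < y) :
    essField a b c y = 0 ↔ y = essRoot a b c := by
  rw [essField_eq_sub_mul_essRate ha hc, mul_eq_zero, sub_eq_zero,
    or_iff_left (essRate_pos ha hb hc hy).ne']

theorem half_lt_essRoot (ha : 0 < a) (hb : 0 < b) (hc : 0 < c) :
    b / (2 * a) < essRoot a b c := by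
  have hF : essField a b c (b / (2 * a)) = -(b / 2) := by
    unfold essField
    field_simp
    ring
  exact (essField_neg_iff ha hb hc (by positivity)).1 (by rw [hF]; linarith)

theorem continuousOn_essField (hc : 0 < c) : ContinuousOn (essField a b c) (Ioi 0) := by
  unfold essField
  exact ContinuousOn.div (by fun_prop) (by fun_prop) fun y hy => (mul_pos hc hy).ne'

theorem continuousOn_essRate (hc : 0 < c) : ContinuousOn (essRate a b c) (Ioi 0) := by
  unfold essRate
  exact ContinuousOn.div (by fun_prop) (by fun_prop) fun y hy => (mul_pos hc hy).ne'

end Field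

section Arc

variable {a b c T₀ : ℝ} {x : ℝ → ℝ}

theorem lt_essRoot_of_hasDerivWithinAt_essField (ha : 0 < a) (hc : 0 < c)
    (hpos : ∀ t ∈ Iic T₀, 0 < x t)
    (hx : ∀ t ∈ Iic T₀, HasDerivWithinAt x (essField a b c (x t)) (Iic T₀) t)
    (hT₀ : x T₀ < essRoot a b c) :
    ∀ t ≤ T₀, x t < essRoot a b c := by
  intro t₀ ht₀
  by_contra! hge
  have hcont : ContinuousOn x (Icc t₀ T₀) := fun t ht =>
    ((hx t ht.2).continuousWithinAt).mono Icc_subset_Iic_self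
  obtain ⟨T, hT, hxT⟩ := intermediate_value_Icc' ht₀ hcont ⟨hT₀.le, hge⟩
  have hsub : Icc T T₀ ⊆ Icc t₀ T₀ := Icc_subset_Icc_left hT.1
  have hrate : ContinuousOn (fun t => essRate a b c (x t)) (Icc T T₀) :=
    (continuousOn_essRate hc).comp (hcont.mono hsub) fun t ht => hpos t ht.2
  have hderiv : ∀ t ∈ Ico T T₀,
      HasDerivWithinAt x ((x t - essRoot a b c) * essRate a b c (x t)) (Ici t) t := by
    intro t ht
    rw [← essField_eq_sub_mul_essRate ha hc]
    exact ((hx t (mem_Iic.2 ht.2.le)).hasDerivAt (Iic_mem_nhds ht.2)).hasDerivWithinAt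
  exact hT₀.ne (eq_of_hasDerivWithinAt_sub_mul (hcont.mono hsub) hrate hderiv hxT T₀
    ⟨hT.2, le_rfl⟩)

theorem strictAntiOn_of_hasDerivWithinAt_essField (ha : 0 < a) (hb : 0 < b) (hc : 0 < c)
    (hpos : ∀ t ∈ Iic T₀, 0 < x t)
    (hx : ∀ t ∈ Iic T₀, HasDerivWithinAt x (essField a b c (x t)) (Iic T₀) t)
    (hlt : ∀ t ≤ T₀, x t < essRoot a b c) :
    StrictAntiOn x (Iic T₀) := by
  refine strictAntiOn_of_deriv_neg (convex_Iic T₀) (fun t ht => (hx t ht).continuousWithinAt)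
    fun t ht => ?_
  rw [interior_Iic, mem_Iio] at ht
  rw [((hx t ht.le).hasDerivAt (Iic_mem_nhds ht)).deriv]
  exact (essField_neg_iff ha hb hc (hpos t ht.le)).2 (hlt t ht.le)

theorem tendsto_essRoot_of_hasDerivWithinAt_essField (ha : 0 < a) (hb : 0 < b) (hc : 0 < c)
    (hpos : ∀ t ∈ Iic T₀, 0 < x t)
    (hx : ∀ t ∈ Iic T₀, HasDerivWithinAt x (essField a b c (x t)) (Iic T₀) t)
    (hanti : AntitoneOn x (Iic T₀))
    (hbdd : BddAbove (x '' Iic T₀)) : Tendsto x atBot (𝓝 (essRoot a b c)) := by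
  obtain ⟨L, hL⟩ := hanti.exists_tendsto_atBot hbdd
  have hL_pos : 0 < L := by
    refine (hpos T₀ self_mem_Iic).trans_le (ge_of_tendsto hL ?_)
    filter_upwards [eventually_le_atBot T₀] with t ht
    exact hanti ht self_mem_Iic ht
  have hderiv : ∀ᶠ t in atBot, HasDerivAt x (essField a b c (x t)) t := by
    filter_upwards [eventually_lt_atBot T₀] with t ht
    exact (hx t ht.le).hasDerivAt (Iic_mem_nhds ht)
  have hF : Tendsto (fun t => essField a b c (x t)) atBot (𝓝 (essField a b c L)) :=
    ((continuousOn_essField hc).continuousAt (Ioi_mem_nhds hL_pos)).tendsto.comp hL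
  have hFL := eq_zero_of_tendsto_atBot_of_tendsto_deriv hderiv hL hF
  rwa [← (essField_eq_zero_iff ha hb hc hL_pos).1 hFL]

end Arc

/-- The ESS singular arc, i.e. the positive solution of
`x' = (a c x² + b(2a - c) x - b²)/(c x)` on `(-∞, t̂]` with `x(t̂) = b/(2a)`, satisfies
`b/(2a) ≤ x(t) < x̄` for all `t ≤ t̂`, is strictly decreasing in `t` (so `x` increases as
`t` decreases), and `x(t) → x̄` as `t → -∞`, where
`x̄ = (b/(2ac))(c - 2a + √(4a² + c²))`. -/
theorem ess_singular_arc_asymptotics (a b c that : ℝ)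
    (ha : 0 < a) (hb : 0 < b) (hc : 0 < c)
    (xbar : ℝ)
    (hxbar : xbar = (b / (2 * a * c)) * (c - 2 * a + Real.sqrt (4 * a ^ 2 + c ^ 2)))
    (x : ℝ → ℝ)
    (hx_pos : ∀ t ∈ Set.Iic that, 0 < x t)
    (hx : ∀ t ∈ Set.Iic that,
      HasDerivWithinAt x
        ((a * c * (x t) ^ 2 + b * (2 * a - c) * x t - b ^ 2) / (c * x t))
        (Set.Iic that) t)
    (hxT : x that = b / (2 * a)) :
    (∀ t ≤ that, b / (2 * a) ≤ x t ∧ x t < xbar) ∧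
    StrictAntiOn x (Set.Iic that) ∧
    Filter.Tendsto x Filter.atBot (nhds xbar) := by
  obtain rfl : xbar = essRoot a b c := hxbar
  have hlt := lt_essRoot_of_hasDerivWithinAt_essField ha hc hx_pos hx
    (hxT ▸ half_lt_essRoot ha hb hc)
  have hanti := strictAntiOn_of_hasDerivWithinAt_essField ha hb hc hx_pos hx hlt
  have hbdd : BddAbove (x '' Iic that) := ⟨essRoot a b c, by
    rintro _ ⟨t, ht, rfl⟩
    exact (hlt t ht).le⟩
  exact ⟨fun t ht => ⟨hxT ▸ hanti.antitoneOn ht self_mem_Iic ht, hlt t ht⟩, hanti,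
    tendsto_essRoot_of_hasDerivWithinAt_essField ha hb hc hx_pos hx hanti.antitoneOn hbdd⟩
end

section
/- Let n ≥ 2, let U be a set, and let f : ℝⁿ × U → ℝⁿ be positively homogeneous of degree one in its first argument: f(s·y, u) = s·f(y, u) for all s > 0, y ∈ ℝⁿ, u ∈ U. Let y : I → ℝⁿ be differentiable on an interval I with y'(t) = f(y(t), u(t)) for a control function u : I → U, and suppose the last coordinate satisfies y_n(t) > 0 for all t ∈ I. Define the reduced state x : I → ℝ^{n−1} by x_i(t) = y_i(t)/y_n(t) for i = 1, …, n−1. Then x is differentiable and satisfies, for each i, x_i'(t) = f_i((x(t), 1), u(t)) − x_i(t)·f_n((x(t), 1), u(t)); that is, x obeys the reduced dynamics x' = f̃^{(n−1)}(x, u) − x·f̃_n(x, u), where f̃(x, u) := f((x, 1), u). -/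
/-! Homogeneity gives `f(y) = y_n • f((y / y_n, 1))`, so both `y_i'` and `y_n'` carry the factor
`y_n`, which cancels in the quotient rule for `x_i = y_i / y_n`. -/

theorem Fin.last_smul_snoc_div_last {K : Type*} [Field K] {n : ℕ} (v : Fin (n + 1) → K)
    (hv : v (Fin.last n) ≠ 0) :
    v (Fin.last n) • (Fin.snoc (fun i : Fin n => v i.castSucc / v (Fin.last n)) 1 :
      Fin (n + 1) → K) = v := by
  funext j
  induction j using Fin.lastCases with
  | last => simp
  | cast k => simp [mul_div_cancel₀ _ hv]

theorem apply_eq_last_smul_apply_snoc_div_last {n : ℕ} {E : Type*} [AddCommGroup E] [Module ℝ E]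
    {f : (Fin (n + 1) → ℝ) → E} (hhom : ∀ s : ℝ, 0 < s → ∀ v, f (s • v) = s • f v)
    (v : Fin (n + 1) → ℝ) (hv : 0 < v (Fin.last n)) :
    f v = v (Fin.last n) • f (Fin.snoc (fun i : Fin n => v i.castSucc / v (Fin.last n)) 1) := by
  rw [← hhom _ hv, Fin.last_smul_snoc_div_last v hv.ne']

theorem HasDerivAt.div_of_hasDerivAt_mul_self {a b : ℝ → ℝ} {p q t : ℝ}
    (ha : HasDerivAt a (b t * p) t) (hb : HasDerivAt b (b t * q) t) (hbt : b t ≠ 0) :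
    HasDerivAt (fun s => a s / b s) (p - a t / b t * q) t := by
  refine (ha.div hb hbt).congr_deriv ?_
  field_simp

theorem homogeneous_state_reduction_general {n : ℕ} {U : Type*}
    (f : (Fin (n + 1) → ℝ) → U → (Fin (n + 1) → ℝ))
    (hhom : ∀ s : ℝ, 0 < s → ∀ (y : Fin (n + 1) → ℝ) (u : U), f (s • y) u = s • f y u)
    (I : Set ℝ) (y : ℝ → Fin (n + 1) → ℝ) (u : ℝ → U)
    (hy : ∀ t ∈ I, HasDerivAt y (f (y t) (u t)) t)
    (hy_pos : ∀ t ∈ I, 0 < y t (Fin.last n))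
    (x : ℝ → Fin n → ℝ)
    (hx : ∀ t, ∀ i : Fin n, x t i = y t i.castSucc / y t (Fin.last n)) :
    ∀ t ∈ I, ∀ i : Fin n,
      HasDerivAt (fun s => x s i)
        (f (Fin.snoc (x t) 1) (u t) i.castSucc
          - x t i * f (Fin.snoc (x t) 1) (u t) (Fin.last n)) t := by
  obtain rfl : x = fun s i => y s i.castSucc / y s (Fin.last n) := funext₂ hx
  intro t ht i
  have hyt := hy t ht
  rw [apply_eq_last_smul_apply_snoc_div_last (f := (f · (u t))) (fun s hs v => hhom s hs v _) _
    (hy_pos t ht)] at hyt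
  have hcoord := hasDerivAt_pi.1 hyt
  exact (hcoord i.castSucc).div_of_hasDerivAt_mul_self (hcoord (Fin.last n)) (hy_pos t ht).ne'

/-- For dynamics `y' = f(y, u)` in `ℝⁿ` (here `n + 1` coordinates, `n ≥ 1`)
with `f` positively homogeneous of degree one in the state and last state coordinate
`y_n > 0`, the reduced state `x_i = y_i / y_n` (for the first `n` coordinates) obeys the
reduced dynamics `x_i' = f̃_i(x, u) - x_i f̃_n(x, u)`, where `f̃(x, u) = f((x, 1), u)`. -/
theorem homogeneous_state_reduction {n : ℕ} (hn : 1 ≤ n) {U : Type*}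
    (f : (Fin (n + 1) → ℝ) → U → (Fin (n + 1) → ℝ))
    (hhom : ∀ s : ℝ, 0 < s → ∀ (y : Fin (n + 1) → ℝ) (u : U), f (s • y) u = s • f y u)
    (I : Set ℝ) (y : ℝ → Fin (n + 1) → ℝ) (u : ℝ → U)
    (hy : ∀ t ∈ I, HasDerivAt y (f (y t) (u t)) t)
    (hy_pos : ∀ t ∈ I, 0 < y t (Fin.last n))
    (x : ℝ → Fin n → ℝ)
    (hx : ∀ t, ∀ i : Fin n, x t i = y t i.castSucc / y t (Fin.last n)) :
    ∀ t ∈ I, ∀ i : Fin n,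
      HasDerivAt (fun s => x s i)
        (f (Fin.snoc (x t) 1) (u t) i.castSucc
          - x t i * f (Fin.snoc (x t) 1) (u t) (Fin.last n)) t :=
  homogeneous_state_reduction_general f hhom I y u hy hy_pos x hx
end

section
/- Let a, b, c > 0 with c ≠ a, let t_s ∈ ℝ, and let λ_s satisfy 0 < λ_s ≤ 1/(2a). For t ≤ t_s define α(t) = e^{−a(t_s − t)}, and L(t) = a·b·[ λ_s·(α(t) + e^{−(c−a)(t_s − t)}) + (1/(c − a))·(e^{−(c−a)(t_s − t)} − c/a) ]. Then L(t_s) = a b (2λ_s − 1/a) ≤ 0 and L'(t) = a b·[ a λ_s α(t) + ((c − a)λ_s + 1)·e^{−(c−a)(t_s − t)} ] > 0 for all t ≤ t_s; consequently L(t) ≤ 0 for all t ≤ t_s. -/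
/-!
`L(t_s) ≤ 0` is just `2 a λ_s ≤ 1`. The derivative of `L` is a combination of the two exponentials
with coefficients `a λ_s > 0` and `(c - a) λ_s + 1 > c λ_s + 1/2 > 0` (again by `a λ_s ≤ 1/2`),
so `L` is increasing on all of `ℝ` and hence `L(t) ≤ L(t_s) ≤ 0` for `t ≤ t_s`.
-/

open Real

theorem hasDerivAt_exp_neg_mul_sub (k s t : ℝ) :
    HasDerivAt (fun t => exp (-(k * (s - t)))) (k * exp (-(k * (s - t)))) t := by
  have hlin : HasDerivAt (fun t => -(k * (s - t))) k t := by
    simpa [Pi.neg_def] using (((hasDerivAt_id t).const_sub s).const_mul k).neg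
  simpa [mul_comm] using hlin.exp

/-- Along a feeding tributary meeting the switch line at time `t_s` with
adjoint value `0 < λ_s ≤ 1/(2a)`, the function
`L(t) = a b [λ_s (e^{-a(t_s-t)} + e^{-(c-a)(t_s-t)}) + (1/(c-a))(e^{-(c-a)(t_s-t)} - c/a)]`
satisfies `L(t_s) = a b (2λ_s - 1/a) ≤ 0` and
`L'(t) = a b [a λ_s e^{-a(t_s-t)} + ((c-a)λ_s + 1) e^{-(c-a)(t_s-t)}] > 0` for `t ≤ t_s`;
consequently `L(t) ≤ 0` for all `t ≤ t_s`. -/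
theorem tributary_L_nonpositive (a b c ts lams : ℝ)
    (ha : 0 < a) (hb : 0 < b) (hc : 0 < c) (hca : c ≠ a)
    (hlams_pos : 0 < lams) (hlams_le : lams ≤ 1 / (2 * a))
    (L : ℝ → ℝ)
    (hL : ∀ t, L t = a * b * (lams * (Real.exp (-(a * (ts - t)))
        + Real.exp (-((c - a) * (ts - t))))
      + (1 / (c - a)) * (Real.exp (-((c - a) * (ts - t))) - c / a))) :
    (L ts = a * b * (2 * lams - 1 / a) ∧ L ts ≤ 0) ∧
    (∀ t ≤ ts,
      HasDerivAt L (a * b * (a * lams * Real.exp (-(a * (ts - t)))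
        + ((c - a) * lams + 1) * Real.exp (-((c - a) * (ts - t))))) t ∧
      0 < a * b * (a * lams * Real.exp (-(a * (ts - t)))
        + ((c - a) * lams + 1) * Real.exp (-((c - a) * (ts - t))))) ∧
    (∀ t ≤ ts, L t ≤ 0) := by
  have hca' : c - a ≠ 0 := sub_ne_zero.mpr hca
  have h2alams : 2 * a * lams ≤ 1 := by
    rwa [le_div_iff₀ (by positivity), mul_comm] at hlams_le
  have hLts : L ts = a * b * (2 * lams - 1 / a) := by
    rw [hL ts]
    simp only [sub_self, mul_zero, neg_zero, exp_zero]
    field_simp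
    ring
  have hLts_nonpos : L ts ≤ 0 := by
    rw [hLts]
    refine mul_nonpos_of_nonneg_of_nonpos (by positivity) ?_
    rw [sub_nonpos, le_div_iff₀ ha]
    linarith
  have hderiv : ∀ t, HasDerivAt L (a * b * (a * lams * exp (-(a * (ts - t)))
      + ((c - a) * lams + 1) * exp (-((c - a) * (ts - t))))) t := by
    intro t
    have hα := hasDerivAt_exp_neg_mul_sub a ts t
    have hβ := hasDerivAt_exp_neg_mul_sub (c - a) ts t
    refine ((((hα.add hβ).const_mul lams).add
      ((hβ.sub_const (c / a)).const_mul (1 / (c - a)))).const_mul (a * b)).congr_deriv ?_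
      |>.congr_of_eventuallyEq (.of_forall hL)
    field_simp
    ring
  have hpos : ∀ t, 0 < a * b * (a * lams * exp (-(a * (ts - t)))
      + ((c - a) * lams + 1) * exp (-((c - a) * (ts - t)))) := by
    intro t
    have hcoef : 0 < (c - a) * lams + 1 := by nlinarith
    exact mul_pos (by positivity) (add_pos (by positivity) (mul_pos hcoef (exp_pos _)))
  have hmono : Monotone L := monotone_of_hasDerivAt_nonneg hderiv fun t => (hpos t).le
  exact ⟨⟨hLts, hLts_nonpos⟩, fun t _ => ⟨hderiv t, hpos t⟩,
    fun t ht => (hmono ht).trans hLts_nonpos⟩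
end
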